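/- Let n ≥ 3 and α > 1. For θ ∈ [-π/(2α), π/(2α)], φ ∈ [0, π], and ω ∈ ℝ^{n-2} with |ω| = 1, define Y(θ, φ, ω) = 2·cos(αθ)·sin(φ)·( cos(θ)·sin(φ), sin(θ)·sin(φ), cos(φ)·ω ) ∈ ℝⁿ (where the last n-2 coordinates are cos(φ)·ω scaled by the common factor). Then |Y(θ, φ, ω) - e₁| ≤ 1, where e₁ = (1, 0, …, 0) ∈ ℝⁿ; that is, every point of the parametrized surface lies in the closed unit ball centered at e₁. -/
import Mathlib


open Real Set

/-- `ℝⁿ` modeled as the `L²`-product `ℝ ×₂ (ℝ ×₂ ℝ^{n-2})`, so that the norm is the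
Euclidean norm. -/
abbrev En (n : ℕ) := WithLp 2 (ℝ × WithLp 2 (ℝ × EuclideanSpace ℝ (Fin (n - 2))))

/-- The point of `ℝⁿ` with first coordinate `a`, second coordinate `b`, and remaining
`n-2` coordinates given by `v`. -/
noncomputable def mk3 (n : ℕ) (a b : ℝ) (v : EuclideanSpace ℝ (Fin (n - 2))) : En n :=
  (WithLp.equiv 2 _).symm (a, (WithLp.equiv 2 _).symm (b, v))

lemma mk3_sub (n : ℕ) (a b a' b' : ℝ) (v v' : EuclideanSpace ℝ (Fin (n-2))) :
    mk3 n a b v - mk3 n a' b' v' = mk3 n (a-a') (b-b') (v-v') := rfl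

lemma mk3_norm_sq (n : ℕ) (a b : ℝ) (v : EuclideanSpace ℝ (Fin (n-2))) :
    ‖mk3 n a b v‖^2 = a^2 + b^2 + ‖v‖^2 := by
  rw [mk3, WithLp.prod_norm_sq_eq_of_L2, WithLp.prod_norm_sq_eq_of_L2]
  simp [sq_abs]
  ring

/-- Every point `Y(θ,φ,ω) = 2cos(αθ)sin(φ)·(cos θ sin φ, sin θ sin φ, cos φ · ω)` of the
parametrized surface lies in the closed unit ball centered at `e₁`. -/
theorem stmt15 (n : ℕ) (hn : 3 ≤ n) (α : ℝ) (hα : 1 < α)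
    (θ φ : ℝ) (hθ : θ ∈ Icc (-(π / (2 * α))) (π / (2 * α))) (hφ : φ ∈ Icc 0 π)
    (ω : EuclideanSpace ℝ (Fin (n - 2))) (hω : ‖ω‖ = 1) :
    ‖mk3 n (2 * Real.cos (α * θ) * Real.sin φ * (Real.cos θ * Real.sin φ))
          (2 * Real.cos (α * θ) * Real.sin φ * (Real.sin θ * Real.sin φ))
          ((2 * Real.cos (α * θ) * Real.sin φ * Real.cos φ) • ω)
        - mk3 n 1 0 0‖ ≤ 1 := by
  have hα0 : (0:ℝ) < α := by linarith
  have habs : |θ| ≤ π / (2 * α) := abs_le.2 ⟨hθ.1, hθ.2⟩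
  have h1 : |α * θ| ≤ π / 2 := by
    rw [abs_mul, abs_of_pos hα0]
    calc α * |θ| ≤ α * (π / (2 * α)) := by nlinarith
    _ = π / 2 := by field_simp
  have h2 : |θ| ≤ |α * θ| := by
    rw [abs_mul, abs_of_pos hα0]; nlinarith [abs_nonneg θ]
  have hcnn : 0 ≤ Real.cos (α * θ) := by
    rw [← Real.cos_abs]
    exact Real.cos_nonneg_of_mem_Icc ⟨by linarith [abs_nonneg (α*θ), pi_pos], h1⟩
  have hcle : Real.cos (α * θ) ≤ Real.cos θ := by
    rw [← Real.cos_abs (α*θ), ← Real.cos_abs θ]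
    exact Real.cos_le_cos_of_nonneg_of_le_pi (abs_nonneg θ)
      (by linarith [pi_pos]) h2
  have hsφ : 0 ≤ Real.sin φ := Real.sin_nonneg_of_mem_Icc hφ
  rw [mk3_sub]
  have hsq : ‖mk3 n (2 * Real.cos (α * θ) * Real.sin φ * (Real.cos θ * Real.sin φ) - 1)
      (2 * Real.cos (α * θ) * Real.sin φ * (Real.sin θ * Real.sin φ) - 0)
      ((2 * Real.cos (α * θ) * Real.sin φ * Real.cos φ) • ω - 0)‖^2 ≤ 1 := by
    rw [mk3_norm_sq]; simp only [sub_zero]; rw [ norm_smul, hω, mul_one, Real.norm_eq_abs, sq_abs]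
    have hpyθ := Real.sin_sq_add_cos_sq θ
    have hpyφ := Real.sin_sq_add_cos_sq φ
    have key : 0 ≤ 4 * Real.cos (α*θ) * Real.sin φ^2 * (Real.cos θ - Real.cos (α*θ)) :=
      mul_nonneg (mul_nonneg (by linarith) (sq_nonneg _)) (by linarith)
    have hid : (2 * Real.cos (α * θ) * Real.sin φ * (Real.cos θ * Real.sin φ) - 1) ^ 2 +
        (2 * Real.cos (α * θ) * Real.sin φ * (Real.sin θ * Real.sin φ)) ^ 2 +
        (2 * Real.cos (α * θ) * Real.sin φ * Real.cos φ) ^ 2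
        = 4 * Real.cos (α*θ) * Real.sin φ^2 * (Real.cos (α*θ) - Real.cos θ) + 1 := by
      linear_combination (4 * Real.cos (α*θ)^2 * Real.sin φ^4) * hpyθ +
        (4 * Real.cos (α*θ)^2 * Real.sin φ^2) * hpyφ
    rw [hid]; linarith
  nlinarith [norm_nonneg (mk3 n (2 * Real.cos (α * θ) * Real.sin φ * (Real.cos θ * Real.sin φ) - 1)
      (2 * Real.cos (α * θ) * Real.sin φ * (Real.sin θ * Real.sin φ) - 0)
      ((2 * Real.cos (α * θ) * Real.sin φ * Real.cos φ) • ω - 0))]
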